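/- Let p⃗=(p_1,…,p_m) be a vector of exponents with mp > 1, set r = p/(mp−1) (with r = 1/m when p = ∞), and let v⃗=(v_1,…,v_m) ∈ A_{p⃗,∞}. Then for every index i_0 with p_{i_0} = 1, the weight v_{i_0}^r belongs to A_1; in particular there is C>0 with (|B|^{−1}∫_B v_{i_0}^r) ≤ C (ess inf_B v_{i_0})^r for every ball B, and consequently v_{i_0}^{−1} ∈ RH_∞. -/

import Mathlib

open MeasureTheory Metric Set
open scoped ENNReal NNReal BigOperators
open scoped Classical

noncomputable section

/-- Euclidean space `ℝⁿ`. -/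
abbrev Rn (n : ℕ) : Type := EuclideanSpace ℝ (Fin n)

/-- The `q`-"norm" of a nonnegative function with respect to the measure `μ`,
for `q ∈ [1,∞]`; `q = ∞` gives the essential supremum. -/
noncomputable def LpNormE {α : Type*} [MeasurableSpace α] (μ : Measure α)
    (g : α → ℝ≥0∞) (q : ℝ≥0∞) : ℝ≥0∞ :=
  if q = ∞ then essSup g μ else (∫⁻ x, g x ^ q.toReal ∂μ) ^ (1 / q.toReal)

/-- Conjugate exponent in `[1,∞]`. -/
noncomputable def conjE (q : ℝ≥0∞) : ℝ≥0∞ :=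
  if q = 1 then ∞ else if q = ∞ then 1 else ENNReal.ofReal (q.toReal / (q.toReal - 1))

/-- Real-valued conjugate exponent of `q ∈ (1,∞]`. -/
noncomputable def conjR (q : ℝ≥0∞) : ℝ :=
  if q = ∞ then 1 else q.toReal / (q.toReal - 1)

/-- A weight: measurable, a.e. positive and finite, and locally integrable. -/
def IsWeight (n : ℕ) (u : Rn n → ℝ≥0∞) : Prop :=
  Measurable u ∧ (∀ᵐ x ∂(volume : Measure (Rn n)), 0 < u x ∧ u x < ∞) ∧
    ∀ (c : Rn n) (R : ℝ), 0 < R → ∫⁻ x in ball c R, u x < ∞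

/-- The `i`-th factor in the `H_m(p,β,δ̃)` condition over the ball `B(c,R)`
(`δ` is the fixed ambient parameter, `β i` the splitting of `β`). For `p i = 1`
the conjugate exponent is `∞` and the factor is an essential supremum. -/
noncomputable def HmFactor (n m : ℕ) (δ : ℝ) (β : Fin m → ℝ) (p : Fin m → ℝ≥0∞)
    (v : Fin m → Rn n → ℝ≥0∞) (c : Rn n) (R : ℝ) (i : Fin m) : ℝ≥0∞ :=
  LpNormE volume
    (fun y => (v i y)⁻¹ *
      (volume (ball c R) ^ (n : ℝ)⁻¹ + edist c y) ^ (-((n : ℝ) - β i + δ / (m : ℝ))))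
    (conjE (p i))

/-- The left-hand side of the `H_m(p,β,δ̃)` condition over the ball `B(c,R)`. -/
noncomputable def HmLHS (n m : ℕ) (δ δt : ℝ) (β : Fin m → ℝ) (p : Fin m → ℝ≥0∞)
    (w : Rn n → ℝ≥0∞) (v : Fin m → Rn n → ℝ≥0∞) (c : Rn n) (R : ℝ) : ℝ≥0∞ :=
  essSup w (volume.restrict (ball c R)) / volume (ball c R) ^ ((δt - δ) / (n : ℝ)) *
    ∏ i, HmFactor n m δ β p v c R i

/-- The class `H_m(p,β,δ̃)`, with fixed ambient parameter `δ` and splitting `β i`. -/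
def MemHm (n m : ℕ) (δ δt : ℝ) (β : Fin m → ℝ) (p : Fin m → ℝ≥0∞)
    (w : Rn n → ℝ≥0∞) (v : Fin m → Rn n → ℝ≥0∞) : Prop :=
  ∃ C : ℝ≥0∞, C ≠ ∞ ∧ ∀ (c : Rn n) (R : ℝ), 0 < R → HmLHS n m δ δt β p w v c R ≤ C

/-- The reverse Hölder class `RH_s`. -/
def MemRH (n : ℕ) (s : ℝ) (u : Rn n → ℝ≥0∞) : Prop :=
  ∃ C : ℝ≥0∞, C ≠ ∞ ∧ ∀ (c : Rn n) (R : ℝ), 0 < R →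
    ((volume (ball c R))⁻¹ * ∫⁻ x in ball c R, u x ^ s) ^ s⁻¹ ≤
      C * ((volume (ball c R))⁻¹ * ∫⁻ x in ball c R, u x)

/-- The reverse Hölder class `RH_∞`. -/
def MemRHinf (n : ℕ) (u : Rn n → ℝ≥0∞) : Prop :=
  ∃ C : ℝ≥0∞, C ≠ ∞ ∧ ∀ (c : Rn n) (R : ℝ), 0 < R →
    essSup u (volume.restrict (ball c R)) ≤
      C * ((volume (ball c R))⁻¹ * ∫⁻ x in ball c R, u x)

/-- The Muckenhoupt class `A_1`. -/
def MemA1 (n : ℕ) (u : Rn n → ℝ≥0∞) : Prop :=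
  ∃ C : ℝ≥0∞, C ≠ ∞ ∧ ∀ (c : Rn n) (R : ℝ), 0 < R →
    (volume (ball c R))⁻¹ * ∫⁻ x in ball c R, u x ≤
      C * essInf u (volume.restrict (ball c R))

/-- A doubling function: the integral over `2B` is controlled by the one over `B`. -/
def Doubling (n : ℕ) (u : Rn n → ℝ≥0∞) : Prop :=
  ∃ C : ℝ≥0∞, C ≠ ∞ ∧ ∀ (c : Rn n) (R : ℝ), 0 < R →
    ∫⁻ x in ball c (2 * R), u x ≤ C * ∫⁻ x in ball c R, u x

/-- The `i`-th factor in the global condition over the ball `B(c,R)`. -/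
noncomputable def GlobalFactor (n m : ℕ) (δ : ℝ) (β : Fin m → ℝ) (p : Fin m → ℝ≥0∞)
    (v : Fin m → Rn n → ℝ≥0∞) (c : Rn n) (R : ℝ) (i : Fin m) : ℝ≥0∞ :=
  LpNormE (volume.restrict (ball c R)ᶜ)
    (fun y => (v i y)⁻¹ * edist c y ^ (-((n : ℝ) - β i + δ / (m : ℝ)))) (conjE (p i))

/-- The global condition associated with the class `H_m(p,β,δ̃)`. -/
def GlobalCond (n m : ℕ) (δ δt : ℝ) (β : Fin m → ℝ) (p : Fin m → ℝ≥0∞)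
    (w : Rn n → ℝ≥0∞) (v : Fin m → Rn n → ℝ≥0∞) : Prop :=
  ∃ C : ℝ≥0∞, C ≠ ∞ ∧ ∀ (c : Rn n) (R : ℝ), 0 < R →
    essSup w (volume.restrict (ball c R)) / volume (ball c R) ^ ((δt - δ) / (n : ℝ)) *
      ∏ i, GlobalFactor n m δ β p v c R i ≤ C

/-- The local condition associated with the class `H_m(p,β,δ̃)`; here `β` is the
total (scalar) parameter. -/
def LocalCond (n m : ℕ) (δt β : ℝ) (p : Fin m → ℝ≥0∞)
    (w : Rn n → ℝ≥0∞) (v : Fin m → Rn n → ℝ≥0∞) : Prop :=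
  ∃ C : ℝ≥0∞, C ≠ ∞ ∧ ∀ (c : Rn n) (R : ℝ), 0 < R →
    essSup w (volume.restrict (ball c R)) /
        volume (ball c R) ^ (δt / (n : ℝ) + (∑ i, (p i)⁻¹).toReal - β / (n : ℝ)) *
      ∏ i, (if p i = 1 then essSup (fun x => (v i x)⁻¹) (volume.restrict (ball c R))
        else ((volume (ball c R))⁻¹ * ∫⁻ x in ball c R, (v i x)⁻¹ ^ conjR (p i)) ^
          (conjR (p i))⁻¹) ≤ C

/-- The multilinear class `A_{p⃗,∞}`. -/
def MemApInf (n m : ℕ) (p : Fin m → ℝ≥0∞) (v : Fin m → Rn n → ℝ≥0∞) : Prop :=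
  ∃ C : ℝ≥0∞, C ≠ ∞ ∧ ∀ (c : Rn n) (R : ℝ), 0 < R →
    essSup (fun x => ∏ i, v i x) (volume.restrict (ball c R)) *
      ∏ i, (if p i = 1 then essSup (fun x => (v i x)⁻¹) (volume.restrict (ball c R))
        else ((volume (ball c R))⁻¹ * ∫⁻ x in ball c R, (v i x)⁻¹ ^ conjR (p i)) ^
          (conjR (p i))⁻¹) ≤ C

/-- The multilinear class `A_{p⃗,q}` for `0 < q < ∞`. -/
def MemApq (n m : ℕ) (p : Fin m → ℝ≥0∞) (q : ℝ) (w : Fin m → Rn n → ℝ≥0∞) : Prop :=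
  ∃ C : ℝ≥0∞, C ≠ ∞ ∧ ∀ (c : Rn n) (R : ℝ), 0 < R →
    ((volume (ball c R))⁻¹ * ∫⁻ x in ball c R, ∏ i, w i x ^ q) ^ (1 / q) *
      ∏ i, (if p i = 1 then essSup (fun x => (w i x)⁻¹) (volume.restrict (ball c R))
        else ((volume (ball c R))⁻¹ * ∫⁻ x in ball c R, (w i x)⁻¹ ^ conjR (p i)) ^
          (conjR (p i))⁻¹) ≤ C

/-- The multilinear Muckenhoupt class `A_{r⃗}`. -/
def MemAvec (n m : ℕ) (r : Fin m → ℝ≥0∞) (u : Fin m → Rn n → ℝ≥0∞) : Prop :=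
  ∃ C : ℝ≥0∞, C ≠ ∞ ∧ ∀ (c : Rn n) (R : ℝ), 0 < R →
    ((volume (ball c R))⁻¹ *
        ∫⁻ x in ball c R, ∏ i, u i x ^ ((∑ j, (r j)⁻¹).toReal⁻¹ * ((r i)⁻¹).toReal)) ^
        (∑ j, (r j)⁻¹).toReal *
      ∏ i, (if r i = 1 then essSup (fun x => (u i x)⁻¹) (volume.restrict (ball c R))
        else ((volume (ball c R))⁻¹ * ∫⁻ x in ball c R, u i x ^ (1 - conjR (r i))) ^
          (conjR (r i))⁻¹) ≤ C

/-- Product Lebesgue measure on `(ℝⁿ)^m`. -/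
noncomputable def pim (n m : ℕ) : Measure (Fin m → Rn n) :=
  Measure.pi fun _ => (volume : Measure (Rn n))

/-- Size condition for a multilinear fractional kernel of order `α`. -/
def SizeCond (n m : ℕ) (α : ℝ) (K : Rn n → (Fin m → Rn n) → ℝ) : Prop :=
  ∃ C : ℝ, 0 < C ∧ ∀ (x : Rn n) (y : Fin m → Rn n), (∑ i, dist x (y i)) ≠ 0 →
    |K x y| ≤ C * (∑ i, dist x (y i)) ^ (α - (m : ℝ) * (n : ℝ))

/-- Smoothness condition with exponent `γ` for a multilinear fractional kernel. -/
def SmoothCond (n m : ℕ) (α γ : ℝ) (K : Rn n → (Fin m → Rn n) → ℝ) : Prop :=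
  ∃ C : ℝ, 0 < C ∧ ∀ (x x' : Rn n) (y : Fin m → Rn n),
    2 * dist x x' < ∑ i, dist x (y i) →
    |K x y - K x' y| ≤ C * dist x x' ^ γ * (∑ i, dist x (y i)) ^ (α - (m : ℝ) * (n : ℝ) - γ)

/-- The Lipschitz space `Λ(δ)`. -/
def MemLip (n : ℕ) (δ : ℝ) (b : Rn n → ℝ) : Prop :=
  ∃ C : ℝ, 0 ≤ C ∧ ∀ x y : Rn n, |b x - b y| ≤ C * dist x y ^ δ

/-- The multilinear integral operator with kernel `K`. -/
noncomputable def TOp (n m : ℕ) (K : Rn n → (Fin m → Rn n) → ℝ)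
    (f : Fin m → Rn n → ℝ) (x : Rn n) : ℝ :=
  ∫ y, K x y * ∏ i, f i (y i) ∂pim n m

/-- The sum-type multilinear commutator `T_{α,b}`. -/
noncomputable def TSumComm (n m : ℕ) (K : Rn n → (Fin m → Rn n) → ℝ)
    (b : Fin m → Rn n → ℝ) (f : Fin m → Rn n → ℝ) (x : Rn n) : ℝ :=
  ∑ j, ∫ y, (b j x - b j (y j)) * K x y * ∏ i, f i (y i) ∂pim n m

/-- The product-type multilinear commutator `𝒯_{α,b}` (integral representation). -/
noncomputable def TProdComm (n m : ℕ) (K : Rn n → (Fin m → Rn n) → ℝ)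
    (b : Fin m → Rn n → ℝ) (f : Fin m → Rn n → ℝ) (x : Rn n) : ℝ :=
  ∫ y, K x y * ∏ i, (b i x - b i (y i)) * f i (y i) ∂pim n m

/-- `‖f · v‖_q` for a real function `f` and a weight `v`. -/
noncomputable def wLpNorm (n : ℕ) (f : Rn n → ℝ) (v : Rn n → ℝ≥0∞) (q : ℝ≥0∞) : ℝ≥0∞ :=
  LpNormE volume (fun x => ENNReal.ofReal |f x| * v x) q

/-- The (nonnegative) multilinear fractional integral `I_{a,m}`. -/
noncomputable def IfracE (n m : ℕ) (a : ℝ) (g : Fin m → Rn n → ℝ≥0∞) (x : Rn n) : ℝ≥0∞ :=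
  ∫⁻ y, (∑ i, edist x (y i)) ^ (a - (m : ℝ) * (n : ℝ)) * ∏ i, g i (y i) ∂pim n m

/-- Commuting with `b` in the `j`-th entry. -/
noncomputable def commAt (n m : ℕ) (T : (Fin m → Rn n → ℝ) → Rn n → ℝ)
    (g : Rn n → ℝ) (j : Fin m) (f : Fin m → Rn n → ℝ) (x : Rn n) : ℝ :=
  g x * T f x - T (Function.update f j fun z => g z * f j z) x

/-- The iterated commutator `[b_k, … [b_2, [b_1, T]_1]_2 … ]_k`. -/
noncomputable def iterComm (n m : ℕ) (T : (Fin m → Rn n → ℝ) → Rn n → ℝ)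
    (b : Fin m → Rn n → ℝ) : ℕ → (Fin m → Rn n → ℝ) → Rn n → ℝ
  | 0 => T
  | k + 1 => fun f x =>
      if h : k < m then commAt n m (iterComm n m T b k) (b ⟨k, h⟩) ⟨k, h⟩ f x
      else iterComm n m T b k f x

end
/-- essSup of the inverse is the inverse of the essInf, for `ℝ≥0∞`-valued functions. -/
lemma essSup_inv_eq_inv_essInf {α : Type*} [MeasurableSpace α] (μ : Measure α)
    (f : α → ℝ≥0∞) : essSup (fun x => (f x)⁻¹) μ = (essInf f μ)⁻¹ := by
  apply le_antisymm
  · refine essSup_le_of_ae_le _ ?_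
    filter_upwards [ae_essInf_le (f := f) (μ := μ)] with x hx
    exact ENNReal.inv_le_inv.2 hx
  · have h : (essSup (fun x => (f x)⁻¹) μ)⁻¹ ≤ essInf f μ := by
      refine le_essInf_of_ae_le _ ?_
      filter_upwards [ae_le_essSup (f := fun x => (f x)⁻¹) (μ := μ)] with x hx
      calc (essSup (fun x => (f x)⁻¹) μ)⁻¹ ≤ ((f x)⁻¹)⁻¹ := ENNReal.inv_le_inv.2 hx
        _ = f x := inv_inv _
    calc (essInf f μ)⁻¹ ≤ ((essSup (fun x => (f x)⁻¹) μ)⁻¹)⁻¹ := ENNReal.inv_le_inv.2 h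
      _ = _ := inv_inv _

lemma essInf_rpow_le {α : Type*} [MeasurableSpace α] (μ : Measure α)
    (f : α → ℝ≥0∞) {r : ℝ} (hr : 0 ≤ r) :
    essInf f μ ^ r ≤ essInf (fun x => f x ^ r) μ := by
  refine le_essInf_of_ae_le _ ?_
  filter_upwards [ae_essInf_le (f := f) (μ := μ)] with x hx
  exact ENNReal.rpow_le_rpow hx hr

/-- Core Hölder estimate for the `A_{p⃗,∞}` argument, over an abstract measure. -/
lemma apinf_core {α : Type*} [MeasurableSpace α] (ν : Measure α)
    {m : ℕ} (v : Fin m → α → ℝ≥0∞) (hv : ∀ i, Measurable (v i))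
    (hpos : ∀ᵐ x ∂ν, ∀ i, 0 < v i x ∧ v i x < ∞)
    (i₀ : Fin m) (S : Finset (Fin m)) (hi₀S : i₀ ∉ S)
    (q : Fin m → ℝ) (hq : ∀ i ∈ S, 0 < q i)
    (r : ℝ) (hrpos : 0 < r) (hsum : ∑ i ∈ S, r * (q i)⁻¹ = 1)
    (G : Fin m → ℝ≥0∞)
    (hGS : ∀ i ∈ S, G i = (∫⁻ x, ((v i x)⁻¹) ^ q i ∂ν) ^ (q i)⁻¹)
    (hGnS : ∀ i ∉ S, G i = essSup (fun x => (v i x)⁻¹) ν)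
    (C : ℝ≥0∞)
    (hA : essSup (fun x => ∏ i, v i x) ν * ∏ i, G i ≤ C) :
    (∫⁻ x, v i₀ x ^ r ∂ν) * (essSup (fun x => (v i₀ x)⁻¹) ν) ^ r ≤ C ^ r := by
  classical
  set e : Fin m → ℝ≥0∞ := fun i => essSup (fun x => (v i x)⁻¹) ν with he
  set E : ℝ≥0∞ := essSup (fun x => ∏ i, v i x) ν with hE
  set T : Finset (Fin m) := (Finset.univ.erase i₀) \ S with hT
  have hST : S ⊆ Finset.univ.erase i₀ := fun i hi =>
    Finset.mem_erase.2 ⟨fun h => hi₀S (h ▸ hi), Finset.mem_univ i⟩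
  have hTe : ∀ i ∈ T, G i = e i := fun i hi => hGnS i (Finset.mem_sdiff.1 hi).2
  -- pointwise bound
  have hub : ∀ᵐ x ∂ν, v i₀ x ^ r ≤ (E * ∏ i ∈ T, e i) ^ r * ∏ i ∈ S, ((v i x)⁻¹) ^ r := by
    filter_upwards [hpos, ae_le_essSup (f := fun x => ∏ i, v i x) (μ := ν),
      ae_all_iff.2 (fun i => ae_le_essSup (f := fun x => (v i x)⁻¹) (μ := ν))] with x hx h1x h2x
    have hid : (∏ i, v i x) * ∏ i ∈ Finset.univ.erase i₀, (v i x)⁻¹ = v i₀ x := by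
      rw [← Finset.mul_prod_erase Finset.univ (fun i => v i x) (Finset.mem_univ i₀),
        mul_assoc, ← Finset.prod_mul_distrib]
      have h1 : ∀ i ∈ Finset.univ.erase i₀, v i x * (v i x)⁻¹ = 1 := fun i _ =>
        ENNReal.mul_inv_cancel (hx i).1.ne' (hx i).2.ne
      rw [Finset.prod_congr rfl h1, Finset.prod_const_one, mul_one]
    have hsplit : ∏ i ∈ Finset.univ.erase i₀, (v i x)⁻¹ =
        (∏ i ∈ T, (v i x)⁻¹) * ∏ i ∈ S, (v i x)⁻¹ := (Finset.prod_sdiff hST).symm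
    have hb : v i₀ x ≤ (E * ∏ i ∈ T, e i) * ∏ i ∈ S, (v i x)⁻¹ := by
      rw [← hid, hsplit, ← mul_assoc]
      exact mul_le_mul' (mul_le_mul' h1x (Finset.prod_le_prod' fun i _ => h2x i)) le_rfl
    calc v i₀ x ^ r ≤ ((E * ∏ i ∈ T, e i) * ∏ i ∈ S, (v i x)⁻¹) ^ r :=
          ENNReal.rpow_le_rpow hb hrpos.le
      _ = _ := by
          rw [ENNReal.mul_rpow_of_nonneg _ _ hrpos.le, ENNReal.prod_rpow_of_nonneg hrpos.le]
  -- integrate and apply Hölder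
  have hXle : ∫⁻ x, v i₀ x ^ r ∂ν ≤
      (E * ∏ i ∈ T, e i) ^ r * ∫⁻ x, ∏ i ∈ S, ((v i x)⁻¹) ^ r ∂ν := by
    calc ∫⁻ x, v i₀ x ^ r ∂ν
        ≤ ∫⁻ x, (E * ∏ i ∈ T, e i) ^ r * ∏ i ∈ S, ((v i x)⁻¹) ^ r ∂ν := lintegral_mono_ae hub
      _ = _ := lintegral_const_mul'' _
          ((Finset.measurable_prod S fun i _ => ((hv i).inv.pow_const r)).aemeasurable)
  have hHold : ∫⁻ x, ∏ i ∈ S, ((v i x)⁻¹) ^ r ∂ν ≤ ∏ i ∈ S, G i ^ r := by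
    have h1 : ∀ x, ∏ i ∈ S, ((v i x)⁻¹) ^ r
        = ∏ i ∈ S, (((v i x)⁻¹) ^ q i) ^ (r * (q i)⁻¹) := by
      intro x
      refine Finset.prod_congr rfl fun i hi => ?_
      rw [← ENNReal.rpow_mul]
      congr 1
      rw [mul_comm r, ← mul_assoc, mul_inv_cancel₀ (hq i hi).ne', one_mul]
    calc ∫⁻ x, ∏ i ∈ S, ((v i x)⁻¹) ^ r ∂ν
        = ∫⁻ x, ∏ i ∈ S, (((v i x)⁻¹) ^ q i) ^ (r * (q i)⁻¹) ∂ν := by simp_rw [h1]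
      _ ≤ ∏ i ∈ S, (∫⁻ x, ((v i x)⁻¹) ^ q i ∂ν) ^ (r * (q i)⁻¹) :=
          ENNReal.lintegral_prod_norm_pow_le S
            (fun i _ => ((hv i).inv.pow_const _).aemeasurable) hsum
            (fun i hi => mul_nonneg hrpos.le (inv_nonneg.2 (hq i hi).le))
      _ = ∏ i ∈ S, G i ^ r := by
          refine Finset.prod_congr rfl fun i hi => ?_
          rw [hGS i hi, ← ENNReal.rpow_mul, mul_comm r]
  have hXF : ∫⁻ x, v i₀ x ^ r ∂ν ≤ (E * (∏ i ∈ T, e i) * ∏ i ∈ S, G i) ^ r := by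
    calc ∫⁻ x, v i₀ x ^ r ∂ν ≤ (E * ∏ i ∈ T, e i) ^ r * ∏ i ∈ S, G i ^ r :=
          hXle.trans (mul_le_mul' le_rfl hHold)
      _ = _ := by
          rw [ENNReal.prod_rpow_of_nonneg hrpos.le,
            ← ENNReal.mul_rpow_of_nonneg _ _ hrpos.le]
  have hGid : E * (∏ i ∈ T, e i) * (∏ i ∈ S, G i) * e i₀ = E * ∏ i, G i := by
    have h1 : ∏ i, G i = G i₀ * ∏ i ∈ Finset.univ.erase i₀, G i :=
      (Finset.mul_prod_erase _ _ (Finset.mem_univ i₀)).symm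
    have h2 : ∏ i ∈ Finset.univ.erase i₀, G i = (∏ i ∈ T, G i) * ∏ i ∈ S, G i :=
      (Finset.prod_sdiff hST).symm
    have h3 : ∏ i ∈ T, G i = ∏ i ∈ T, e i := Finset.prod_congr rfl hTe
    rw [h1, h2, h3, hGnS i₀ hi₀S, ← he]
    ring
  calc (∫⁻ x, v i₀ x ^ r ∂ν) * e i₀ ^ r
      ≤ (E * (∏ i ∈ T, e i) * ∏ i ∈ S, G i) ^ r * e i₀ ^ r := mul_le_mul' hXF le_rfl
    _ = (E * (∏ i ∈ T, e i) * (∏ i ∈ S, G i) * e i₀) ^ r :=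
        (ENNReal.mul_rpow_of_nonneg _ _ hrpos.le).symm
    _ = (E * ∏ i, G i) ^ r := by rw [hGid]
    _ ≤ C ^ r := ENNReal.rpow_le_rpow hA hrpos.le

/-- Core reverse-Hölder estimate: an `A_1`-type bound for `v^r` forces `v⁻¹ ∈ RH_∞`. -/
lemma rhinf_core {α : Type*} [MeasurableSpace α] (ν : Measure α) [IsProbabilityMeasure ν]
    (v : α → ℝ≥0∞) (hv : Measurable v)
    (hpos : ∀ᵐ x ∂ν, 0 < v x ∧ v x < ∞)
    (r : ℝ) (hrpos : 0 < r)
    (K : ℝ≥0∞) (hKt : K ≠ ∞)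
    (hK : ∫⁻ x, v x ^ r ∂ν ≤ K ^ r * essInf v ν ^ r) :
    essSup (fun x => (v x)⁻¹) ν ≤ K * ∫⁻ x, (v x)⁻¹ ∂ν := by
  have hrne : r ≠ 0 := hrpos.ne'
  set d := essInf v ν with hd
  have hνne : (ae ν).NeBot := ae_neBot.2 (IsProbabilityMeasure.ne_zero ν)
  have hdt : d ≠ ∞ := by
    intro h
    have h1 : ∀ᵐ x ∂ν, d ≤ v x := ae_essInf_le
    have h2 : ∀ᵐ _x ∂ν, False := by
      filter_upwards [hpos, h1] with x hx h1x
      rw [h] at h1x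
      exact hx.2.ne (top_le_iff.1 h1x)
    exact hνne.ne (Filter.eventually_false_iff_eq_bot.1 h2)
  have hd0 : d ≠ 0 := by
    intro h
    rw [h, ENNReal.zero_rpow_of_pos hrpos, mul_zero, le_zero_iff] at hK
    have h3 : ∀ᵐ x ∂ν, v x ^ r = 0 := (lintegral_eq_zero_iff (hv.pow_const r)).1 hK
    have h4 : ∀ᵐ _x ∂ν, False := by
      filter_upwards [hpos, h3] with x hx h3x
      exact hx.1.ne' ((ENNReal.rpow_eq_zero_iff_of_pos hrpos).1 h3x)
    exact hνne.ne (Filter.eventually_false_iff_eq_bot.1 h4)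
  set a : ℝ := r / (1 + r) with ha
  have h1r : (0:ℝ) < 1 + r := by linarith
  have hconj : (1 + r).HolderConjugate ((1 + r) / r) := by
    rw [Real.holderConjugate_iff]
    constructor
    · linarith
    · rw [inv_div]
      field_simp
  have hfg : ∀ᵐ x ∂ν, v x ^ a * v x ^ (-a) = 1 := by
    filter_upwards [hpos] with x hx
    rw [← ENNReal.rpow_add _ _ hx.1.ne' hx.2.ne, add_neg_cancel, ENNReal.rpow_zero]
  have h0 := ENNReal.lintegral_mul_le_Lp_mul_Lq ν hconj
    ((hv.pow_const a).aemeasurable) ((hv.pow_const (-a)).aemeasurable)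
  simp only [Pi.mul_apply] at h0
  have hl : ∫⁻ x, v x ^ a * v x ^ (-a) ∂ν = 1 := by
    rw [lintegral_congr_ae (g := fun _ => (1:ℝ≥0∞)) hfg, lintegral_one, measure_univ]
  have hf' : ∫⁻ x, (v x ^ a) ^ (1 + r) ∂ν = ∫⁻ x, v x ^ r ∂ν := by
    refine lintegral_congr fun x => ?_
    rw [← ENNReal.rpow_mul]
    congr 1
    rw [ha, div_mul_cancel₀ _ h1r.ne']
  have hg' : ∫⁻ x, (v x ^ (-a)) ^ ((1 + r) / r) ∂ν = ∫⁻ x, (v x)⁻¹ ∂ν := by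
    have haux : -a * ((1 + r) / r) = -1 := by
      rw [ha]
      field_simp
    refine lintegral_congr fun x => ?_
    rw [← ENNReal.rpow_mul, haux, ENNReal.rpow_neg_one]
  have hHold2 : (1:ℝ≥0∞) ≤
      (∫⁻ x, v x ^ r ∂ν) ^ (1/(1+r)) * (∫⁻ x, (v x)⁻¹ ∂ν) ^ (1/((1+r)/r)) := by
    calc (1:ℝ≥0∞) = ∫⁻ x, v x ^ a * v x ^ (-a) ∂ν := hl.symm
      _ ≤ _ := h0
      _ = _ := by rw [hf', hg']
  have hw : (0:ℝ) < (1+r)/r := by positivity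
  have h2 := ENNReal.rpow_le_rpow hHold2 hw.le
  have he1 : (1/(1+r)) * ((1+r)/r) = 1/r := by
    field_simp
  have he2 : (1/((1+r)/r)) * ((1+r)/r) = 1 := by
    rw [one_div, inv_mul_cancel₀ hw.ne']
  rw [ENNReal.one_rpow, ENNReal.mul_rpow_of_nonneg _ _ hw.le, ← ENNReal.rpow_mul,
    ← ENNReal.rpow_mul, he1, he2, ENNReal.rpow_one] at h2
  have h3 : (∫⁻ x, v x ^ r ∂ν) ^ (1/r) ≤ K * d := by
    calc (∫⁻ x, v x ^ r ∂ν) ^ (1/r) ≤ (K ^ r * d ^ r) ^ (1/r) :=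
          ENNReal.rpow_le_rpow hK (by positivity)
      _ = K * d := by
          rw [ENNReal.mul_rpow_of_nonneg _ _ (by positivity : (0:ℝ) ≤ 1/r),
            ← ENNReal.rpow_mul, ← ENNReal.rpow_mul, mul_one_div, div_self hrne,
            ENNReal.rpow_one, ENNReal.rpow_one]
  have h4 : (1:ℝ≥0∞) ≤ (K * d) * ∫⁻ x, (v x)⁻¹ ∂ν :=
    h2.trans (mul_le_mul' h3 le_rfl)
  rw [essSup_inv_eq_inv_essInf, ← hd]
  calc d⁻¹ = d⁻¹ * 1 := (mul_one _).symm
    _ ≤ d⁻¹ * ((K * d) * ∫⁻ x, (v x)⁻¹ ∂ν) := mul_le_mul' le_rfl h4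
    _ = (d⁻¹ * d) * (K * ∫⁻ x, (v x)⁻¹ ∂ν) := by ring
    _ = K * ∫⁻ x, (v x)⁻¹ ∂ν := by rw [ENNReal.inv_mul_cancel hd0 hdt, one_mul]

/-- From the proof of Corollary 6.4: if `v⃗ ∈ A_{p⃗,∞}` and `mp > 1`, then for every
index `i₀` with `p_{i₀} = 1` the weight `v_{i₀}^r` (with `r = p/(mp-1)`, i.e.
`1/r = m - 1/p`) belongs to `A_1`; in particular the average of `v_{i₀}^r` over any
ball is controlled by `(ess inf_B v_{i₀})^r`, and consequently `v_{i₀}⁻¹ ∈ RH_∞`. -/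
theorem ApInf_exponent_one_A1_RHinf
    (n m : ℕ) (hn : 1 ≤ n) (hm : 1 ≤ m)
    (p : Fin m → ℝ≥0∞) (hp : ∀ i, 1 ≤ p i)
    (hmp : (∑ i, (p i)⁻¹).toReal < (m : ℝ))
    (r : ℝ) (hr : r = ((m : ℝ) - (∑ i, (p i)⁻¹).toReal)⁻¹)
    (v : Fin m → Rn n → ℝ≥0∞) (hv : ∀ i, IsWeight n (v i))
    (hA : MemApInf n m p v)
    (i₀ : Fin m) (hi₀ : p i₀ = 1) :
    MemA1 n (fun x => v i₀ x ^ r) ∧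
      (∃ C : ℝ≥0∞, C ≠ ∞ ∧ ∀ (c : Rn n) (R : ℝ), 0 < R →
        (volume (ball c R))⁻¹ * ∫⁻ x in ball c R, v i₀ x ^ r ≤
          C * essInf (v i₀) (volume.restrict (ball c R)) ^ r) ∧
      MemRHinf n (fun x => (v i₀ x)⁻¹) := by
  classical
  obtain ⟨C, hCne, hC⟩ := hA
  have hrpos : 0 < r := by
    rw [hr]
    exact inv_pos.2 (by linarith)
  have hCr : C ^ r ≠ ∞ := ENNReal.rpow_ne_top_of_nonneg hrpos.le hCne
  set S : Finset (Fin m) := Finset.univ.filter (fun i => ¬ p i = 1) with hS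
  have hi₀S : i₀ ∉ S := by simp [hS, hi₀]
  have hqfact : ∀ i ∈ S, 0 < conjR (p i) ∧ (conjR (p i))⁻¹ = 1 - ((p i)⁻¹).toReal := by
    intro i hi
    have hi1 : p i ≠ 1 := by simpa [hS] using hi
    by_cases htop : p i = ∞
    · constructor
      · simp [conjR, htop]
      · simp [conjR, htop]
    · have h1 : (1:ℝ≥0∞) < p i := lt_of_le_of_ne (hp i) (Ne.symm hi1)
      have ht : 1 < (p i).toReal := by
        have := (ENNReal.toReal_lt_toReal (by simp) htop).2 h1
        simpa using this
      constructor
      · simp only [conjR, htop, if_false, if_neg hi1]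
        exact div_pos (by linarith) (by linarith)
      · simp only [conjR, htop, if_false, if_neg hi1]
        rw [inv_div, ENNReal.toReal_inv]
        field_simp
  have hsum : ∑ i ∈ S, r * (conjR (p i))⁻¹ = 1 := by
    rw [← Finset.mul_sum]
    have h1 : ∑ i ∈ S, (conjR (p i))⁻¹ = ∑ i, (1 - ((p i)⁻¹).toReal) := by
      rw [hS, Finset.sum_filter]
      refine Finset.sum_congr rfl fun i _ => ?_
      by_cases hi : p i = 1
      · simp [hi]
      · rw [if_pos hi, (hqfact i (by simp [hS, hi])).2]
    have hne : ∀ i : Fin m, (p i)⁻¹ ≠ ∞ := fun i => by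
      have h2 : (p i)⁻¹ ≤ 1 := by simpa using ENNReal.inv_le_inv.2 (hp i)
      exact (h2.trans_lt ENNReal.one_lt_top).ne
    have h2 : (∑ i, (p i)⁻¹).toReal = ∑ i, ((p i)⁻¹).toReal :=
      ENNReal.toReal_sum (fun i _ => hne i)
    have h3 : (m:ℝ) - (∑ i, (p i)⁻¹).toReal ≠ 0 := sub_ne_zero.2 hmp.ne'
    rw [h1, Finset.sum_sub_distrib, Finset.sum_const, Finset.card_univ, Fintype.card_fin,
      nsmul_eq_mul, mul_one, ← h2, hr, inv_mul_cancel₀ h3]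
  -- the key per-ball estimate
  have key : ∀ (c : Rn n) (R : ℝ), 0 < R →
      (volume (ball c R))⁻¹ * ∫⁻ x in ball c R, v i₀ x ^ r ≤
        C ^ r * essInf (v i₀) (volume.restrict (ball c R)) ^ r := by
    intro c R hR
    have hV0 : volume (ball c R) ≠ 0 := (measure_ball_pos volume c hR).ne'
    have hVt : volume (ball c R) ≠ ∞ := measure_ball_lt_top.ne
    set ν : Measure (Rn n) := (volume (ball c R))⁻¹ • (volume.restrict (ball c R)) with hν
    have hsmul : ((volume (ball c R))⁻¹ : ℝ≥0∞) ≠ 0 := ENNReal.inv_ne_zero.2 hVt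
    have haeeq : ∀ {f : Rn n → ℝ≥0∞},
        essSup f ν = essSup f (volume.restrict (ball c R)) :=
      fun {f} => by rw [hν, essSup_ennreal_smul_measure hsmul]
    have hint : ∀ (f : Rn n → ℝ≥0∞), ∫⁻ x, f x ∂ν =
        (volume (ball c R))⁻¹ * ∫⁻ x in ball c R, f x := fun f => by
      rw [hν, lintegral_smul_measure, smul_eq_mul]
    have hpos : ∀ᵐ x ∂ν, ∀ i, 0 < v i x ∧ v i x < ∞ := by
      rw [hν, Measure.ae_ennreal_smul_measure_iff hsmul]
      exact ae_restrict_of_ae (ae_all_iff.2 fun i => (hv i).2.1)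
    have hν1 : ν Set.univ = 1 := by
      rw [hν, Measure.smul_apply, Measure.restrict_apply_univ, smul_eq_mul]
      exact ENNReal.inv_mul_cancel hV0 hVt
    have hν0 : ν ≠ 0 := by
      intro h2
      rw [h2] at hν1
      simp at hν1
    set G : Fin m → ℝ≥0∞ := fun i =>
      if p i = 1 then essSup (fun x => (v i x)⁻¹) ν
      else (∫⁻ x, ((v i x)⁻¹) ^ conjR (p i) ∂ν) ^ (conjR (p i))⁻¹ with hG
    have hAν : essSup (fun x => ∏ i, v i x) ν * ∏ i, G i ≤ C := by
      have h := hC c R hR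
      have hprod : ∏ i, G i = ∏ i, (if p i = 1
          then essSup (fun x => (v i x)⁻¹) (volume.restrict (ball c R))
          else ((volume (ball c R))⁻¹ * ∫⁻ x in ball c R, (v i x)⁻¹ ^ conjR (p i)) ^
            (conjR (p i))⁻¹) := by
        refine Finset.prod_congr rfl fun i _ => ?_
        rw [hG]
        by_cases hi : p i = 1
        · simp only [hi, if_true]
          exact haeeq
        · simp only [hi, if_false]
          rw [hint]
      rw [haeeq, hprod]
      exact h
    have hcore := apinf_core ν v (fun i => (hv i).1) hpos i₀ S hi₀S
      (fun i => conjR (p i)) (fun i hi => (hqfact i hi).1) r hrpos hsum G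
      (fun i hi => by
        have hi1 : ¬ p i = 1 := by simpa [hS] using hi
        rw [hG]
        simp only [if_neg hi1])
      (fun i hi => by
        have hi1 : p i = 1 := by simpa [hS] using hi
        rw [hG]
        simp only [if_pos hi1]) C hAν
    have hei0 : essSup (fun x => (v i₀ x)⁻¹) ν ≠ 0 := by
      intro h
      have h1 := ENNReal.essSup_eq_zero_iff.1 h
      have h4 : ∀ᵐ _x ∂ν, False := by
        filter_upwards [hpos, h1] with x hx h1x
        simp only [Pi.zero_apply] at h1x
        exact (ENNReal.inv_ne_zero.2 (hx i₀).2.ne) h1x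
      exact (ae_neBot.2 hν0).ne (Filter.eventually_false_iff_eq_bot.1 h4)
    have hdiv : ∫⁻ x, v i₀ x ^ r ∂ν ≤ C ^ r / essSup (fun x => (v i₀ x)⁻¹) ν ^ r :=
      (ENNReal.le_div_iff_mul_le
        (Or.inl (by simpa [ENNReal.rpow_eq_zero_iff_of_pos hrpos] using hei0))
        (Or.inr hCr)).2 hcore
    calc (volume (ball c R))⁻¹ * ∫⁻ x in ball c R, v i₀ x ^ r
        = ∫⁻ x, v i₀ x ^ r ∂ν := (hint _).symm
      _ ≤ C ^ r / essSup (fun x => (v i₀ x)⁻¹) ν ^ r := hdiv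
      _ = C ^ r * essInf (v i₀) (volume.restrict (ball c R)) ^ r := by
          rw [div_eq_mul_inv, ← ENNReal.inv_rpow, haeeq,
            essSup_inv_eq_inv_essInf, inv_inv]
  refine ⟨⟨C ^ r, hCr, fun c R hR => ?_⟩, ⟨C ^ r, hCr, key⟩, ⟨C, hCne, fun c R hR => ?_⟩⟩
  · exact (key c R hR).trans
      (mul_le_mul' le_rfl (essInf_rpow_le _ _ hrpos.le))
  · -- the RH_∞ estimate
    have hV0 : volume (ball c R) ≠ 0 := (measure_ball_pos volume c hR).ne'
    have hVt : volume (ball c R) ≠ ∞ := measure_ball_lt_top.ne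
    set ν : Measure (Rn n) := (volume (ball c R))⁻¹ • (volume.restrict (ball c R)) with hν
    have hsmul : ((volume (ball c R))⁻¹ : ℝ≥0∞) ≠ 0 := ENNReal.inv_ne_zero.2 hVt
    have haeeq : ∀ {f : Rn n → ℝ≥0∞},
        essSup f ν = essSup f (volume.restrict (ball c R)) :=
      fun {f} => by rw [hν, essSup_ennreal_smul_measure hsmul]
    have hint : ∀ (f : Rn n → ℝ≥0∞), ∫⁻ x, f x ∂ν =
        (volume (ball c R))⁻¹ * ∫⁻ x in ball c R, f x := fun f => by
      rw [hν, lintegral_smul_measure, smul_eq_mul]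
    have hν1 : ν Set.univ = 1 := by
      rw [hν, Measure.smul_apply, Measure.restrict_apply_univ, smul_eq_mul]
      exact ENNReal.inv_mul_cancel hV0 hVt
    haveI hνProb : IsProbabilityMeasure ν := ⟨hν1⟩
    have hpos' : ∀ᵐ x ∂ν, 0 < v i₀ x ∧ v i₀ x < ∞ := by
      rw [hν, Measure.ae_ennreal_smul_measure_iff hsmul]
      exact ae_restrict_of_ae (hv i₀).2.1
    have hessInf : essInf (v i₀) ν = essInf (v i₀) (volume.restrict (ball c R)) := by
      rw [← inv_inv (essInf (v i₀) ν), ← essSup_inv_eq_inv_essInf, haeeq,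
        essSup_inv_eq_inv_essInf, inv_inv]
    have hK : ∫⁻ x, v i₀ x ^ r ∂ν ≤ C ^ r * essInf (v i₀) ν ^ r := by
      rw [hint, hessInf]
      exact key c R hR
    have hres := rhinf_core ν (v i₀) (hv i₀).1 hpos' r hrpos C hCne hK
    rw [haeeq, hint] at hres
    exact hres
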